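/- arXiv:2604.16991 — 2 statements merged into one kernel-verified Lean document; each statement's English description precedes it below -/
import Mathlib

section
/- Let A_cl, P ∈ ℝ^{n×n} with P symmetric positive definite and P ⪰ I, and suppose A_cl P A_clᵀ − P + I ⪯ 0. Then A_clᵀ P⁻¹ A_cl − P⁻¹ ≺ 0 (negative definite). -/
/-!
The LMI says `P - A P Aᵀ ⪰ I`, so `P - A P Aᵀ ≻ 0`. Both `P - A P Aᵀ` and `P⁻¹ - Aᵀ P⁻¹ A` are
Schur complements of the block matrix `[[P, A], [Aᵀ, P⁻¹]]`, with respect to its lower-right and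
upper-left block respectively, and each is positive definite exactly when the block matrix is.
-/

open Matrix

namespace Matrix.PosDef

variable {m n R : Type*} [Fintype m] [Fintype n] [CommRing R] [PartialOrder R] [StarRing R]
  [StarOrderedRing R]

theorem fromBlocks₁₁_posDef_iff [DecidableEq m] {A : Matrix m m R} (B : Matrix m n R)
    (D : Matrix n n R) (hA : A.PosDef) [Invertible A] :
    (fromBlocks A B Bᴴ D).PosDef ↔ (D - Bᴴ * A⁻¹ * B).PosDef := by
  rw [posDef_iff_dotProduct_mulVec, posDef_iff_dotProduct_mulVec,
    IsHermitian.fromBlocks₁₁ _ _ hA.1]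
  refine and_congr_right fun _ => ⟨fun h y hy => ?_, fun h v hv => ?_⟩
  · have hpos := h (x := -((A⁻¹ * B) *ᵥ y) ⊕ᵥ y) fun h0 =>
      hy (by simpa using congrArg (· ∘ Sum.inr) h0)
    rwa [dotProduct_mulVec, schur_complement_eq₁₁ B D _ _ hA.1, neg_add_cancel, dotProduct_zero,
      zero_add, ← dotProduct_mulVec] at hpos
  · rw [dotProduct_mulVec, ← Sum.elim_comp_inl_inr v, schur_complement_eq₁₁ B D _ _ hA.1,
      ← dotProduct_mulVec, ← dotProduct_mulVec]
    by_cases hy : v ∘ Sum.inr = 0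
    · have hx : v ∘ Sum.inl ≠ 0 := fun hx => hv <| by
        ext (i | i)
        exacts [congrFun hx i, congrFun hy i]
      rw [hy]
      simpa using hA.dotProduct_mulVec_pos hx
    · exact add_pos_of_nonneg_of_pos (hA.posSemidef.dotProduct_mulVec_nonneg _) (h hy)

theorem fromBlocks₂₂_posDef_iff [DecidableEq n] (A : Matrix m m R) (B : Matrix m n R)
    {D : Matrix n n R} (hD : D.PosDef) [Invertible D] :
    (fromBlocks A B Bᴴ D).PosDef ↔ (A - B * D⁻¹ * Bᴴ).PosDef := by
  have hswap : (fromBlocks A B Bᴴ D).submatrix Sum.swap Sum.swap = fromBlocks D Bᴴ B A :=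
    fromBlocks_submatrix_sum_swap_sum_swap ..
  have hschur := fromBlocks₁₁_posDef_iff Bᴴ A hD
  rw [conjTranspose_conjTranspose] at hschur
  rw [← hschur, ← hswap]
  refine ⟨fun h => h.submatrix Sum.swap_leftInverse.injective, fun h => ?_⟩
  simpa using h.submatrix Sum.swap_leftInverse.injective

end Matrix.PosDef

theorem Matrix.PosDef.inv_sub_conjTranspose_mul_inv_mul_iff {n K : Type*} [Fintype n]
    [DecidableEq n] [Field K] [PartialOrder K] [StarRing K] [StarOrderedRing K]
    {P : Matrix n n K} (hP : P.PosDef) (A : Matrix n n K) :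
    (P⁻¹ - Aᴴ * P⁻¹ * A).PosDef ↔ (P - A * P * Aᴴ).PosDef := by
  have := hP.isUnit.invertible
  have := hP.inv.isUnit.invertible
  rw [← fromBlocks₁₁_posDef_iff A P⁻¹ hP, fromBlocks₂₂_posDef_iff P A hP.inv,
    inv_inv_of_invertible]

theorem lyapunov_strict_decrease_general (n : ℕ)
    (Acl P : Matrix (Fin n) (Fin n) ℝ)
    (hP : P.PosDef)
    (hlmi : (P - 1 - Acl * P * Aclᵀ).PosSemidef) :
    (P⁻¹ - Aclᵀ * P⁻¹ * Acl).PosDef := by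
  have hstein : (P - Acl * P * Aclᵀ).PosDef := by
    simpa only [sub_right_comm, sub_add_cancel] using PosDef.posSemidef_add hlmi PosDef.one
  rw [← conjTranspose_eq_transpose_of_trivial] at hstein ⊢
  exact (hP.inv_sub_conjTranspose_mul_inv_mul_iff Acl).mpr hstein

theorem lyapunov_strict_decrease (n : ℕ)
    (Acl P : Matrix (Fin n) (Fin n) ℝ)
    (hP : P.PosDef) (hPI : (P - 1).PosSemidef)
    (hlmi : (P - 1 - Acl * P * Aclᵀ).PosSemidef) :
    (P⁻¹ - Aclᵀ * P⁻¹ * Acl).PosDef :=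
  lyapunov_strict_decrease_general n Acl P hP hlmi
end

section
/- Let A_cl, P ∈ ℝ^{n×n} with P symmetric and P ≻ I, and suppose A_cl P A_clᵀ − P + I ⪯ 0. Then A_clᵀ P⁻¹ A_cl − P⁻¹ ⪯ −λ_min(P⁻¹) · P⁻¹. -/
/-!
Write `λ = λ_min(P⁻¹)`. From `λ • 1 ≤ P⁻¹`, conjugating by `√P` gives `λ • P ≤ 1`, so the LMI
yields the contraction `A P Aᵀ ≤ (1 - λ) P`. In the coordinates `B = P^{-1/2} A P^{1/2}` this reads
`B Bᵀ ≤ (1 - λ) • 1`, which is equivalent to `Bᵀ B ≤ (1 - λ) • 1` because `B Bᵀ` and `Bᵀ B` have the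
same spectrum; conjugating back by `P^{-1/2}` gives `Aᵀ P⁻¹ A ≤ (1 - λ) P⁻¹`.
-/

open Matrix
open scoped MatrixOrder ComplexOrder

namespace Matrix

variable {m : Type*} [Fintype m] [DecidableEq m] {𝕜 : Type*} [RCLike 𝕜]

theorem spectrum_mul_comm {K S : Type*} [Field K] [CommRing S] [Algebra K S]
    (A B : Matrix m m S) : spectrum K (A * B) = spectrum K (B * A) := by
  ext x
  by_cases hx : x = 0
  · subst hx
    simp only [spectrum.zero_mem_iff, isUnit_iff_isUnit_det, det_mul_comm]
  · simpa [hx] using congrArg (x ∈ ·) (spectrum.nonzero_mul_comm A B)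

theorem IsHermitian.iInf_eigenvalues_smul_one_le {M : Matrix m m 𝕜} (hM : M.IsHermitian) :
    (⨅ i, hM.eigenvalues i) • 1 ≤ M := by
  rw [← Algebra.algebraMap_eq_smul_one, algebraMap_le_iff_le_spectrum hM.isSelfAdjoint,
    hM.spectrum_real_eq_range_eigenvalues]
  rintro _ ⟨i, rfl⟩
  exact ciInf_le (Finite.bddBelow_range _) i

theorem mul_conjTranspose_self_le_smul_one_iff {B : Matrix m m 𝕜} {c : ℝ} :
    B * Bᴴ ≤ c • 1 ↔ Bᴴ * B ≤ c • 1 := by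
  rw [← Algebra.algebraMap_eq_smul_one,
    le_algebraMap_iff_spectrum_le (isHermitian_mul_conjTranspose_self B),
    le_algebraMap_iff_spectrum_le (isHermitian_conjTranspose_mul_self B), spectrum_mul_comm]

theorem PosDef.exists_sqrt {P : Matrix m m 𝕜} (hP : P.PosDef) :
    ∃ R : Matrix m m 𝕜, IsUnit R.det ∧ R.IsHermitian ∧ R * R = P := by
  have hR := CFC.sqrt_mul_sqrt_self P hP.posSemidef.nonneg
  refine ⟨CFC.sqrt P, ?_, (CFC.sqrt_nonneg P).posSemidef.isHermitian, hR⟩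
  rw [← isUnit_iff_isUnit_det]
  exact isUnit_of_mul_isUnit_left (hR ▸ hP.isUnit)

variable {P : Matrix m m 𝕜}

theorem PosDef.smul_le_one_of_smul_one_le_inv (hP : P.PosDef) {l : ℝ} (h : l • 1 ≤ P⁻¹) :
    l • P ≤ 1 := by
  obtain ⟨R, hR, hRh, rfl⟩ := hP.exists_sqrt
  have := R.invertibleOfIsUnitDet hR
  simpa [mul_assoc, mul_inv_rev] using hRh.isSelfAdjoint.conjugate_le_conjugate h

theorem PosDef.conjTranspose_mul_inv_mul_le_smul_inv (hP : P.PosDef) {A : Matrix m m 𝕜}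
    {c : ℝ} (h : A * P * Aᴴ ≤ c • P) : Aᴴ * P⁻¹ * A ≤ c • P⁻¹ := by
  obtain ⟨R, hR, hRh, rfl⟩ := hP.exists_sqrt
  have := R.invertibleOfIsUnitDet hR
  have hRinv := hRh.inv.isSelfAdjoint
  set B := R⁻¹ * A * R
  have hB : B * Bᴴ ≤ c • 1 := by
    simpa [B, mul_assoc, hRh.eq, conjTranspose_nonsing_inv] using hRinv.conjugate_le_conjugate h
  simpa [B, mul_assoc, mul_inv_rev, hRh.eq, conjTranspose_nonsing_inv] using
    hRinv.conjugate_le_conjugate (mul_conjTranspose_self_le_smul_one_iff.mp hB)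

end Matrix

theorem lyapunov_geometric_decrease_general (n : ℕ)
    (Acl P : Matrix (Fin n) (Fin n) ℝ)
    (hPI : (P - 1).PosDef)
    (hlmi : (P - 1 - Acl * P * Aclᵀ).PosSemidef)
    (hPinv : (P⁻¹).IsHermitian) :
    ((1 - ⨅ i, hPinv.eigenvalues i) • P⁻¹ - Aclᵀ * P⁻¹ * Acl).PosSemidef := by
  have hP : P.PosDef := by simpa using hPI.add .one
  set l := ⨅ i, hPinv.eigenvalues i
  have hlP : l • P ≤ 1 := hP.smul_le_one_of_smul_one_le_inv hPinv.iInf_eigenvalues_smul_one_le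
  have hcontract : Acl * P * Aclᴴ ≤ (1 - l) • P := calc
    Acl * P * Aclᴴ ≤ P - 1 := hlmi
    _ ≤ P - l • P := sub_le_sub_left hlP P
    _ = (1 - l) • P := by rw [sub_smul, one_smul]
  exact hP.conjTranspose_mul_inv_mul_le_smul_inv hcontract

theorem lyapunov_geometric_decrease (n : ℕ)
    (Acl P : Matrix (Fin n) (Fin n) ℝ)
    (hP : P.IsHermitian) (hPI : (P - 1).PosDef)
    (hlmi : (P - 1 - Acl * P * Aclᵀ).PosSemidef)
    (hPinv : (P⁻¹).IsHermitian) :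
    ((1 - ⨅ i, hPinv.eigenvalues i) • P⁻¹ - Aclᵀ * P⁻¹ * Acl).PosSemidef :=
  lyapunov_geometric_decrease_general n Acl P hPI hlmi hPinv
end
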